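/- arXiv:1812.10146 — 2 statements merged into one kernel-verified Lean document; each statement's English description precedes it below -/
import Mathlib

section
/- The OCATA A_φ constructed from an EMITL formula φ in negative normal form accepts exactly the timed language of φ: ⟦A_φ⟧ = ⟦φ⟧. -/
/-- Transition formulae Γ(S) of one-clock alternating timed automata. -/
inductive Gamma (S : Type*) where
  | top : Gamma S
  | bot : Gamma S
  | or (γ₁ γ₂ : Gamma S) : Gamma S
  | and (γ₁ γ₂ : Gamma S) : Gamma S
  | loc (s : S) : Gamma S
  | le (c : ℕ) : Gamma S
  | lt (c : ℕ) : Gamma S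
  | ge (c : ℕ) : Gamma S
  | gt (c : ℕ) : Gamma S
  | reset (γ : Gamma S) : Gamma S

/-- Renaming of locations in a transition formula. -/
def Gamma.map {S T : Type*} (f : S → T) : Gamma S → Gamma T
  | .top => .top
  | .bot => .bot
  | .or γ₁ γ₂ => .or (γ₁.map f) (γ₂.map f)
  | .and γ₁ γ₂ => .and (γ₁.map f) (γ₂.map f)
  | .loc s => .loc (f s)
  | .le c => .le c
  | .lt c => .lt c
  | .ge c => .ge c
  | .gt c => .gt c
  | .reset γ => .reset (γ.map f)

/-- The dual transition formula: swaps ⊤/⊥ and ∨/∧, fixes locations, negates clock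
comparisons, commutes with reset. -/
def Gamma.dual {S : Type*} : Gamma S → Gamma S
  | .top => .bot
  | .bot => .top
  | .or γ₁ γ₂ => .and γ₁.dual γ₂.dual
  | .and γ₁ γ₂ => .or γ₁.dual γ₂.dual
  | .loc s => .loc s
  | .le c => .gt c
  | .lt c => .ge c
  | .ge c => .lt c
  | .gt c => .le c
  | .reset γ => .reset γ.dual

def bigOr {S : Type*} (l : List (Gamma S)) : Gamma S := l.foldr .or .bot
def bigAnd {S : Type*} (l : List (Gamma S)) : Gamma S := l.foldr .and .top

/-- An interval with endpoints in ℕ ∪ {∞}. -/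
structure Ivl where
  lo : ℕ
  loStrict : Bool
  hi : Option ℕ
  hiStrict : Bool

/-- Membership of a real in the interval. -/
def Ivl.mem (I : Ivl) (t : ℝ) : Prop :=
  (if I.loStrict then (I.lo : ℝ) < t else (I.lo : ℝ) ≤ t) ∧
  (match I.hi with
   | none => True
   | some h => if I.hiStrict then t < (h : ℝ) else t ≤ (h : ℝ))

/-- The clock constraint `x ∈ I` as a transition formula. -/
def Ivl.toGamma {S : Type*} (I : Ivl) : Gamma S :=
  .and (if I.loStrict then .gt I.lo else .ge I.lo)
       (match I.hi with
        | none => .top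
        | some h => if I.hiStrict then .lt h else .le h)

/-- A non-deterministic finite automaton over the alphabet {1,…,n}, with locations in ℕ,
transitions given as successor lists, and decidable final locations. -/
structure NFAL (n : ℕ) where
  init : ℕ
  trans : ℕ → Fin n → List ℕ
  final : ℕ → Bool

/-- EMITL formulae in negative normal form: ⊤, ⊥, literals, ∧, ∨, automata
modalities A_I and dual automata modalities Ã_I. -/
inductive NNF (AP : Type) : Type where
  | top : NNF AP
  | bot : NNF AP
  | atom (p : AP) : NNF AP
  | natom (p : AP) : NNF AP
  | and (φ ψ : NNF AP) : NNF AP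
  | or (φ ψ : NNF AP) : NNF AP
  | auto (n : ℕ) (A : NFAL n) (I : Ivl) (args : Fin n → NNF AP) : NNF AP
  | dauto (n : ℕ) (A : NFAL n) (I : Ivl) (args : Fin n → NNF AP) : NNF AP

/-- The locations of the OCATA A_φ contributed by the subformulae of φ (excluding the
initial location s^init): locations of each automaton subformula together with the
locations contributed by its arguments. -/
def locT {AP : Type} : NNF AP → Type
  | .top => Empty
  | .bot => Empty
  | .atom _ => Empty
  | .natom _ => Empty
  | .and φ ψ => locT φ ⊕ locT ψ
  | .or φ ψ => locT φ ⊕ locT ψ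
  | .auto n _ _ args => ℕ ⊕ (Σ a : Fin n, locT (args a))
  | .dauto n _ _ args => ℕ ⊕ (Σ a : Fin n, locT (args a))

/-- The inductive construction of the OCATA A_φ: for each formula φ, the pair of
(i) the entry transition formula δ(φ,σ) and (ii) the transition function on internal
locations, as in the paper (with the substitutions s_F ← s_F ∨ x ∈ I for A_I and
s_F ← s_F ∧ x ∉ I for Ã_I). -/
def ocataDefs {AP : Type} :
    (φ : NNF AP) →
      ((AP → Bool) → Gamma (locT φ)) × (locT φ → (AP → Bool) → Gamma (locT φ))
  | .top => (fun _ => .top, fun ℓ _ => ℓ.elim)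
  | .bot => (fun _ => .bot, fun ℓ _ => ℓ.elim)
  | .atom p => (fun σ => if σ p then .top else .bot, fun ℓ _ => ℓ.elim)
  | .natom p => (fun σ => if σ p then .bot else .top, fun ℓ _ => ℓ.elim)
  | .and φ ψ =>
      (fun σ => .and ((ocataDefs φ).1 σ |>.map Sum.inl) ((ocataDefs ψ).1 σ |>.map Sum.inr),
       fun ℓ σ => match ℓ with
         | .inl ℓ => (ocataDefs φ).2 ℓ σ |>.map Sum.inl
         | .inr ℓ => (ocataDefs ψ).2 ℓ σ |>.map Sum.inr)
  | .or φ ψ =>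
      (fun σ => .or ((ocataDefs φ).1 σ |>.map Sum.inl) ((ocataDefs ψ).1 σ |>.map Sum.inr),
       fun ℓ σ => match ℓ with
         | .inl ℓ => (ocataDefs φ).2 ℓ σ |>.map Sum.inl
         | .inr ℓ => (ocataDefs ψ).2 ℓ σ |>.map Sum.inr)
  | .auto n A I args =>
      let stepA : ℕ → (AP → Bool) → Gamma (ℕ ⊕ (Σ a : Fin n, locT (args a))) :=
        fun s σ =>
          bigOr (List.ofFn fun a : Fin n =>
            .and ((ocataDefs (args a)).1 σ |>.map fun m => Sum.inr ⟨a, m⟩)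
                 (bigOr ((A.trans s a).map fun s' =>
                   if A.final s' then .or (.loc (Sum.inl s')) I.toGamma
                   else .loc (Sum.inl s'))))
      (fun σ => .reset (stepA A.init σ),
       fun ℓ σ => match ℓ with
         | .inl s => stepA s σ
         | .inr ⟨a, m⟩ => (ocataDefs (args a)).2 m σ |>.map fun m' => Sum.inr ⟨a, m'⟩)
  | .dauto n A I args =>
      let stepD : ℕ → (AP → Bool) → Gamma (ℕ ⊕ (Σ a : Fin n, locT (args a))) :=
        fun s σ =>
          bigAnd (List.ofFn fun a : Fin n =>
            .or ((ocataDefs (args a)).1 σ |>.map fun m => Sum.inr ⟨a, m⟩)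
                (bigAnd ((A.trans s a).map fun s' =>
                  if A.final s' then .and (.loc (Sum.inl s')) (Gamma.dual I.toGamma)
                  else .loc (Sum.inl s'))))
      (fun σ => .reset (stepD A.init σ),
       fun ℓ σ => match ℓ with
         | .inl s => stepD s σ
         | .inr ⟨a, m⟩ => (ocataDefs (args a)).2 m σ |>.map fun m' => Sum.inr ⟨a, m'⟩)

/-- The final locations of A_φ: exactly the locations contributed by dual automata
(Ã_I) subformulae. -/
def finalP {AP : Type} : (φ : NNF AP) → locT φ → Prop
  | .top => fun _ => False
  | .bot => fun _ => False
  | .atom _ => fun _ => False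
  | .natom _ => fun _ => False
  | .and φ ψ => fun ℓ => match ℓ with
      | .inl ℓ => finalP φ ℓ
      | .inr ℓ => finalP ψ ℓ
  | .or φ ψ => fun ℓ => match ℓ with
      | .inl ℓ => finalP φ ℓ
      | .inr ℓ => finalP ψ ℓ
  | .auto _ _ _ args => fun ℓ => match ℓ with
      | .inl _ => False
      | .inr ⟨a, m⟩ => finalP (args a) m
  | .dauto _ _ _ args => fun ℓ => match ℓ with
      | .inl _ => True
      | .inr ⟨a, m⟩ => finalP (args a) m

/-- A timed word: non-decreasing, non-negative, unbounded (non-Zeno) timestamps. -/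
structure TimedWord (α : Type*) where
  sym : ℕ → α
  tm  : ℕ → ℝ
  nonneg : ∀ i, 0 ≤ tm i
  mono : Monotone tm
  nonZeno : ∀ r : ℝ, ∃ j, r ≤ tm j

def prevT {α : Type*} (ρ : TimedWord α) : ℕ → ℝ
  | 0 => 0
  | i + 1 => ρ.tm i

def delay {α : Type*} (ρ : TimedWord α) (i : ℕ) : ℝ := ρ.tm i - prevT ρ i

/-- `GSat M v γ` : the set of states `M` is a model of `γ` w.r.t. clock valuation `v`. -/
def GSat {S : Type*} (M : Set (S × ℝ)) : ℝ → Gamma S → Prop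
  | _, .top => True
  | _, .bot => False
  | v, .or γ₁ γ₂ => GSat M v γ₁ ∨ GSat M v γ₂
  | v, .and γ₁ γ₂ => GSat M v γ₁ ∧ GSat M v γ₂
  | v, .loc s => (s, v) ∈ M
  | v, .le c => v ≤ (c : ℝ)
  | v, .lt c => v < (c : ℝ)
  | v, .ge c => (c : ℝ) ≤ v
  | v, .gt c => (c : ℝ) < v
  | _, .reset γ => GSat M 0 γ

/-- A one-clock alternating timed automaton. -/
structure OCATA (L α : Type*) where
  init : L
  δ : L → α → Gamma L
  final : L → Prop

structure RunData (L α : Type*) where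
  V : ℕ → Set (L × ℝ)
  edge : ℕ → (L × ℝ) → (L × ℝ) → Prop

def IsRun {L α : Type*} (A : OCATA L α) (ρ : TimedWord α) (R : RunData L α) : Prop :=
  (A.init, 0) ∈ R.V 0 ∧
  ∀ i sv, sv ∈ R.V i →
    GSat {t | R.edge i sv t} (sv.2 + delay ρ i) (A.δ sv.1 (ρ.sym i)) ∧
    ∀ t, R.edge i sv t → t ∈ R.V (i + 1)

/-- Accepting: every infinite path in the run DAG visits final locations
infinitely often. -/
def RunAccepting {L α : Type*} (A : OCATA L α) (R : RunData L α) : Prop :=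
  ∀ (i₀ : ℕ) (p : ℕ → L × ℝ), p 0 ∈ R.V i₀ →
    (∀ m, R.edge (i₀ + m) (p m) (p (m + 1))) →
    ∀ N, ∃ m, N ≤ m ∧ A.final (p m).1

/-- The timed language of an OCATA. -/
def OCATALang {L α : Type*} (A : OCATA L α) : Set (TimedWord α) :=
  {ρ | ∃ R : RunData L α, IsRun A ρ R ∧ RunAccepting A R}

/-- Runs of an NFA (with successor-list transitions) on finite words. -/
def NFAL.RunOn {n : ℕ} (A : NFAL n) : ℕ → List (Fin n) → ℕ → Prop
  | q, [], q' => q = q'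
  | q, a :: w, q' => ∃ q'' ∈ A.trans q a, A.RunOn q'' w q'

def NFAL.Accepts {n : ℕ} (A : NFAL n) (w : List (Fin n)) : Prop :=
  w ≠ [] ∧ ∃ qf, A.final qf = true ∧ A.RunOn A.init w qf

def wordOf {α : Type*} (a : ℕ → α) (i j : ℕ) : List α :=
  (List.range (j + 1 - i)).map fun k => a (i + k)

/-- The automata-modality clause of the pointwise semantics. -/
def AutoWitL {n : ℕ} (A : NFAL n) (tm : ℕ → ℝ) (H : ℕ → Fin n → Prop)
    (I : Ivl) (i : ℕ) : Prop :=
  ∃ j, i ≤ j ∧ I.mem (tm j - tm i) ∧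
    ∃ a : ℕ → Fin n, A.Accepts (wordOf a i j) ∧ ∀ ℓ, i ≤ ℓ → ℓ ≤ j → H ℓ (a ℓ)

/-- Pointwise semantics of EMITL formulae in negative normal form; the dual modality
satisfies Ã_I(φ₁,…,φₙ) ≡ ¬A_I(¬φ₁,…,¬φₙ). -/
def NNF.sat {AP : Type} (ρ : TimedWord (AP → Bool)) : ℕ → NNF AP → Prop
  | _, .top => True
  | _, .bot => False
  | i, .atom p => ρ.sym i p = true
  | i, .natom p => ρ.sym i p = false
  | i, .and φ ψ => NNF.sat ρ i φ ∧ NNF.sat ρ i ψ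
  | i, .or φ ψ => NNF.sat ρ i φ ∨ NNF.sat ρ i ψ
  | i, .auto _ A I args =>
      AutoWitL A ρ.tm (fun ℓ a => NNF.sat ρ ℓ (args a)) I i
  | i, .dauto _ A I args =>
      ¬ AutoWitL A ρ.tm (fun ℓ a => ¬ NNF.sat ρ ℓ (args a)) I i

/-- The OCATA A_φ: locations are s^init (= `none`) together with the locations
contributed by the subformulae of φ; transitions as constructed by `ocataDefs`;
final locations are those contributed by dual automata subformulae. -/
def Aphi {AP : Type} (φ : NNF AP) : OCATA (Option (locT φ)) (AP → Bool) where
  init := none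
  δ := fun s σ =>
    match s with
    | none => .reset (((ocataDefs φ).1 σ).map some)
    | some ℓ => ((ocataDefs φ).2 ℓ σ).map some
  final := fun s =>
    match s with
    | none => False
    | some ℓ => finalP φ ℓ

/-!
Call a configuration at level `j` accepting if it lies on some accepting run fragment, a run DAG
of the automaton that may start at any level. Well-ordering all such fragments and letting every
vertex follow the edges of the least fragment containing it glues them into one accepting
fragment; hence a configuration is accepting iff its transition formula is satisfied by the
accepting configurations of the next level.

The locations of the automaton of a subformula embed into those of `A_φ`, so by induction on `φ`
the entry formula `δ(φ, σᵢ)` is satisfied by the accepting configurations iff `φ` holds at `i`.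
In the `A_I` case the locations of the NFA are not final, so an accepting run cannot stay among
them forever and has to exhibit an accepting NFA run that ends inside `I`. In the `Ã_I` case they
are final, so the configurations from which no such run of the dual exists already form an
accepting region.
-/

variable {S T α : Type*}

theorem GSat_mono {M M' : Set (S × ℝ)} (h : M ⊆ M') {v : ℝ} {γ : Gamma S} :
    GSat M v γ → GSat M' v γ := by
  induction γ generalizing v with
  | or _ _ ih₁ ih₂ => exact Or.imp ih₁ ih₂
  | and _ _ ih₁ ih₂ => exact And.imp ih₁ ih₂
  | loc _ => exact fun hs => h hs
  | reset _ ih => exact ih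
  | _ => exact id

theorem GSat_map (f : T → S) (M : Set (S × ℝ)) (v : ℝ) (γ : Gamma T) :
    GSat M v (γ.map f) ↔ GSat {tv | (f tv.1, tv.2) ∈ M} v γ := by
  induction γ generalizing v <;> simp_all [Gamma.map, GSat]

theorem GSat_bigOr {M : Set (S × ℝ)} {v : ℝ} {l : List (Gamma S)} :
    GSat M v (bigOr l) ↔ ∃ γ ∈ l, GSat M v γ := by
  induction l <;> simp_all [bigOr, GSat]

theorem GSat_bigAnd {M : Set (S × ℝ)} {v : ℝ} {l : List (Gamma S)} :
    GSat M v (bigAnd l) ↔ ∀ γ ∈ l, GSat M v γ := by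
  induction l <;> simp_all [bigAnd, GSat]

theorem GSat_toGamma {M : Set (S × ℝ)} {v : ℝ} {I : Ivl} :
    GSat M v (I.toGamma : Gamma S) ↔ I.mem v := by
  obtain ⟨lo, loStrict, hi, hiStrict⟩ := I
  cases loStrict <;> cases hi <;> cases hiStrict <;> simp [Ivl.toGamma, Ivl.mem, GSat]

theorem GSat_dual_toGamma {M : Set (S × ℝ)} {v : ℝ} {I : Ivl} :
    GSat M v (I.toGamma : Gamma S).dual ↔ ¬ I.mem v := by
  obtain ⟨lo, loStrict, hi, hiStrict⟩ := I
  cases loStrict <;> cases hi <;> cases hiStrict <;>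
    simp [Ivl.toGamma, Ivl.mem, Gamma.dual, GSat, or_iff_not_imp_left]

/-- A run DAG of `δ` on `ρ` that need not be rooted: `V j` are the configurations about to read
the `j`-th symbol and `E j` the edges from level `j` to level `j + 1`. -/
structure IsAccFragment (δ : S → α → Gamma S) (fin : S → Prop) (ρ : TimedWord α)
    (V : ℕ → Set (S × ℝ)) (E : ℕ → S × ℝ → S × ℝ → Prop) : Prop where
  consistent : ∀ j sv, sv ∈ V j →
    GSat {t | E j sv t} (sv.2 + delay ρ j) (δ sv.1 (ρ.sym j)) ∧ ∀ t, E j sv t → t ∈ V (j + 1)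
  accepting : ∀ (j : ℕ) (p : ℕ → S × ℝ), p 0 ∈ V j → (∀ m, E (j + m) (p m) (p (m + 1))) →
    ∀ N, ∃ m, N ≤ m ∧ fin (p m).1

def accConfigs (δ : S → α → Gamma S) (fin : S → Prop) (ρ : TimedWord α) (j : ℕ) :
    Set (S × ℝ) :=
  {sv | ∃ V E, IsAccFragment δ fin ρ V E ∧ sv ∈ V j}

section Fragment

variable {δ : S → α → Gamma S} {fin : S → Prop} {ρ : TimedWord α}

theorem IsAccFragment.iUnion {ι : Type*} [LinearOrder ι] [WellFoundedLT ι]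
    {V : ι → ℕ → Set (S × ℝ)} {E : ι → ℕ → S × ℝ → S × ℝ → Prop}
    (hF : ∀ k, IsAccFragment δ fin ρ (V k) (E k)) :
    ∃ E', IsAccFragment δ fin ρ (fun j => ⋃ k, V k j) E' := by
  have hleast : ∀ j sv, sv ∈ ⋃ k, V k j → ∃ k, IsLeast {k | sv ∈ V k j} k := by
    intro j sv hsv
    have hne : {k | sv ∈ V k j}.Nonempty := Set.mem_iUnion.1 hsv
    exact ⟨wellFounded_lt.min _ hne, wellFounded_lt.min_mem _ hne,
      fun k hk => wellFounded_lt.min_le hk⟩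
  refine ⟨fun j sv t => ∃ k, IsLeast {k | sv ∈ V k j} k ∧ E k j sv t, ⟨?_, ?_⟩⟩
  · intro j sv hsv
    obtain ⟨k, hk⟩ := hleast j sv hsv
    refine ⟨GSat_mono ?_ ((hF k).consistent j sv hk.1).1, ?_⟩
    · exact fun t ht => ⟨k, hk, ht⟩
    · rintro t ⟨k', hk', ht⟩
      exact Set.mem_iUnion.2 ⟨k', ((hF k').consistent j sv hk'.1).2 t ht⟩
  · -- the least fragment containing the current vertex can only decrease along a path
    intro j p _ hp N
    choose own hown hE using hp
    have hanti : Antitone own := antitone_nat_of_succ_le fun m =>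
      (hown (m + 1)).2 (((hF (own m)).consistent _ _ (hown m).1).2 _ (hE m))
    obtain ⟨n, hn⟩ := WellFoundedLT.antitone_chain_condition hanti
    have htail : ∀ m, E (own n) (j + n + m) (p (n + m)) (p (n + m + 1)) := fun m => by
      rw [hn (n + m) (Nat.le_add_right n m), add_assoc]
      exact hE (n + m)
    obtain ⟨m, hm, hfin⟩ := (hF (own n)).accepting (j + n) _ (hown n).1 htail N
    exact ⟨n + m, by omega, hfin⟩

theorem IsAccFragment.subset_accConfigs {V : ℕ → Set (S × ℝ)} {E : ℕ → S × ℝ → S × ℝ → Prop}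
    (hF : IsAccFragment δ fin ρ V E) (j : ℕ) : V j ⊆ accConfigs δ fin ρ j :=
  fun _ hsv => ⟨V, E, hF, hsv⟩

theorem exists_isAccFragment_accConfigs (δ : S → α → Gamma S) (fin : S → Prop)
    (ρ : TimedWord α) : ∃ E, IsAccFragment δ fin ρ (accConfigs δ fin ρ) E := by
  let ι := {F : (ℕ → Set (S × ℝ)) × (ℕ → S × ℝ → S × ℝ → Prop) // IsAccFragment δ fin ρ F.1 F.2}
  obtain ⟨_, _⟩ := exists_wellFoundedLT ι
  obtain ⟨E, hE⟩ := IsAccFragment.iUnion (fun F : ι => F.2)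
  refine ⟨E, ?_⟩
  convert hE using 1
  ext j sv
  simp [accConfigs, ι]

theorem GSat_accConfigs_of_mem {j : ℕ} {sv : S × ℝ} (h : sv ∈ accConfigs δ fin ρ j) :
    GSat (accConfigs δ fin ρ (j + 1)) (sv.2 + delay ρ j) (δ sv.1 (ρ.sym j)) := by
  obtain ⟨V, E, hF, hsv⟩ := h
  obtain ⟨hg, hsucc⟩ := hF.consistent j sv hsv
  exact GSat_mono (fun t ht => hF.subset_accConfigs _ (hsucc t ht)) hg

theorem path_mem {X : Type*} {V : ℕ → Set X} {E : ℕ → X → X → Prop}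
    (hE : ∀ j x, x ∈ V j → ∀ y, E j x y → y ∈ V (j + 1)) {j : ℕ} {p : ℕ → X}
    (h0 : p 0 ∈ V j) (hp : ∀ m, E (j + m) (p m) (p (m + 1))) : ∀ m, p m ∈ V (j + m)
  | 0 => h0
  | m + 1 => hE _ _ (path_mem hE h0 hp m) _ (hp m)

theorem subset_accConfigs_of_step {C : ℕ → Set (S × ℝ)}
    (hstep : ∀ j sv, sv ∈ C j →
      GSat (C (j + 1) ∪ accConfigs δ fin ρ (j + 1)) (sv.2 + delay ρ j) (δ sv.1 (ρ.sym j)))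
    (hacc : ∀ j (p : ℕ → S × ℝ), (∀ m, p m ∈ C (j + m)) → ∀ N, ∃ m, N ≤ m ∧ fin (p m).1)
    (j : ℕ) : C j ⊆ accConfigs δ fin ρ j := by
  classical
  obtain ⟨EW, hW⟩ := exists_isAccFragment_accConfigs δ fin ρ
  set W := accConfigs δ fin ρ
  -- inside `W` follow its own edges, so that a path entering `W` is accepted there
  let E : ℕ → S × ℝ → S × ℝ → Prop := fun j sv t =>
    if sv ∈ W j then EW j sv t else t ∈ C (j + 1) ∪ W (j + 1)
  have hWE : ∀ j sv, sv ∈ W j → ∀ t, E j sv t → t ∈ W (j + 1) := fun j sv hsv t ht =>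
    (hW.consistent j sv hsv).2 t (by simpa only [E, if_pos hsv] using ht)
  have hcons : ∀ j sv, sv ∈ C j ∪ W j →
      GSat {t | E j sv t} (sv.2 + delay ρ j) (δ sv.1 (ρ.sym j)) ∧
        ∀ t, E j sv t → t ∈ C (j + 1) ∪ W (j + 1) := by
    intro j sv hsv
    by_cases hw : sv ∈ W j
    · simp only [E, if_pos hw]
      exact ⟨(hW.consistent j sv hw).1, fun t ht => Or.inr ((hW.consistent j sv hw).2 t ht)⟩
    · simp only [E, if_neg hw]
      exact ⟨hstep j sv (hsv.resolve_right hw), fun t ht => ht⟩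
  have hF : IsAccFragment δ fin ρ (fun j => C j ∪ W j) E := by
    refine ⟨hcons, fun j p hp0 hp N => ?_⟩
    by_cases hin : ∃ m₀, p m₀ ∈ W (j + m₀)
    · obtain ⟨m₀, hm₀⟩ := hin
      have hpath : ∀ m, E (j + m₀ + m) (p (m₀ + m)) (p (m₀ + m + 1)) := fun m => by
        rw [add_assoc]; exact hp (m₀ + m)
      have hmem := path_mem hWE hm₀ hpath
      obtain ⟨m, hm, hfin⟩ := hW.accepting (j + m₀) _ hm₀
        (fun m => by have h := hpath m; simp only [E, if_pos (hmem m)] at h; exact h) N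
      exact ⟨m₀ + m, by omega, hfin⟩
    · push Not at hin
      have hmem := path_mem (V := fun j => C j ∪ W j) (fun j sv hsv => (hcons j sv hsv).2) hp0 hp
      exact hacc j p (fun m => (hmem m).resolve_right (hin m)) N
  exact fun sv hsv => hF.subset_accConfigs j (Or.inl hsv)

theorem mem_accConfigs_iff {j : ℕ} {sv : S × ℝ} :
    sv ∈ accConfigs δ fin ρ j ↔
      GSat (accConfigs δ fin ρ (j + 1)) (sv.2 + delay ρ j) (δ sv.1 (ρ.sym j)) := by
  refine ⟨GSat_accConfigs_of_mem, fun h => ?_⟩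
  refine subset_accConfigs_of_step (C := fun k => {x | k = j ∧ x = sv}) ?_ ?_ j ⟨rfl, rfl⟩
  · rintro k x ⟨rfl, rfl⟩
    exact GSat_mono Set.subset_union_right h
  · intro k p hp
    have := (hp 0).1
    have := (hp 1).1
    omega

theorem IsAccFragment.false_of_invariant {V : ℕ → Set (S × ℝ)} {E : ℕ → S × ℝ → S × ℝ → Prop}
    (hF : IsAccFragment δ fin ρ V E) {P : ℕ → S × ℝ → Prop}
    (hP : ∀ j sv, P j sv → ¬ fin sv.1 ∧ ∃ t, E j sv t ∧ P (j + 1) t)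
    {j : ℕ} {sv : S × ℝ} (hsv : sv ∈ V j) (h : P j sv) : False := by
  have : Nonempty (S × ℝ) := ⟨sv⟩
  choose! next hnext using fun k x hx => (hP k x hx).2
  let p : ℕ → S × ℝ := fun m => Nat.rec sv (fun m x => next (j + m) x) m
  have hpP : ∀ m, P (j + m) (p m) := fun m => by
    induction m with
    | zero => exact h
    | succ m ih => exact (hnext _ _ ih).2
  obtain ⟨m, -, hfin⟩ := hF.accepting j p hsv (fun m => (hnext _ _ (hpP m)).1) 0
  exact (hP _ _ (hpP m)).1 hfin

end Fragment

theorem mem_OCATALang_iff {A : OCATA S α} {ρ : TimedWord α} :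
    ρ ∈ OCATALang A ↔ (A.init, 0) ∈ accConfigs A.δ A.final ρ 0 := by
  refine ⟨fun ⟨R, ⟨hinit, hcons⟩, hacc⟩ => ⟨R.V, R.edge, ⟨hcons, hacc⟩, hinit⟩, fun h => ?_⟩
  obtain ⟨E, hF⟩ := exists_isAccFragment_accConfigs A.δ A.final ρ
  exact ⟨⟨_, E⟩, ⟨h, hF.consistent⟩, hF.accepting⟩

section Embedding

variable {δS : S → α → Gamma S} {finS : S → Prop} {δT : T → α → Gamma T} {finT : T → Prop}
  {ρ : TimedWord α} {f : T → S}

theorem IsAccFragment.comap (hδ : ∀ t σ, δS (f t) σ = (δT t σ).map f)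
    (hfin : ∀ t, finS (f t) ↔ finT t) {V : ℕ → Set (S × ℝ)} {E : ℕ → S × ℝ → S × ℝ → Prop}
    (hF : IsAccFragment δS finS ρ V E) :
    IsAccFragment δT finT ρ (fun j => Prod.map f id ⁻¹' V j)
      (fun j tv tv' => E j (Prod.map f id tv) (Prod.map f id tv')) := by
  refine ⟨fun j tv htv => ?_, fun j p hp0 hp N => ?_⟩
  · obtain ⟨hg, hsucc⟩ := hF.consistent j _ htv
    rw [Prod.map_fst, hδ, GSat_map] at hg
    exact ⟨hg, fun t ht => hsucc _ ht⟩
  · obtain ⟨m, hm, hfin'⟩ := hF.accepting j (Prod.map f id ∘ p) hp0 hp N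
    exact ⟨m, hm, (hfin _).1 hfin'⟩

theorem IsAccFragment.map (hδ : ∀ t σ, δS (f t) σ = (δT t σ).map f)
    (hfin : ∀ t, finS (f t) ↔ finT t) (hf : Function.Injective f) {V : ℕ → Set (T × ℝ)}
    {E : ℕ → T × ℝ → T × ℝ → Prop} (hF : IsAccFragment δT finT ρ V E) :
    IsAccFragment δS finS ρ (fun j => Prod.map f id '' V j)
      (fun j sv sv' => ∃ tv tv', E j tv tv' ∧ Prod.map f id tv = sv ∧ Prod.map f id tv' = sv') := by
  have hg : Function.Injective (Prod.map f (id : ℝ → ℝ)) := hf.prodMap Function.injective_id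
  refine ⟨?_, fun j p hp0 hp N => ?_⟩
  · rintro j _ ⟨tv, htv, rfl⟩
    obtain ⟨hgs, hsucc⟩ := hF.consistent j tv htv
    refine ⟨?_, ?_⟩
    · rw [Prod.map_fst, hδ, GSat_map]
      refine GSat_mono ?_ hgs
      exact fun t ht => ⟨tv, t, ht, rfl, rfl⟩
    · rintro _ ⟨tv₁, tv', he, h₁, rfl⟩
      obtain rfl := hg h₁
      exact ⟨tv', hsucc tv' he, rfl⟩
  · -- by injectivity the path lifts to a path of the original fragment
    choose q q' hE hq hq' using hp
    have hq'q : ∀ m, q' m = q (m + 1) := fun m => hg ((hq' m).trans (hq (m + 1)).symm)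
    obtain ⟨tv₀, htv₀, h₀⟩ := hp0
    obtain rfl : tv₀ = q 0 := hg (h₀.trans (hq 0).symm)
    obtain ⟨m, hm, hfin'⟩ := hF.accepting j q htv₀ (fun m => hq'q m ▸ hE m) N
    exact ⟨m, hm, by rw [← hq m]; exact (hfin _).2 hfin'⟩

theorem mem_accConfigs_map_iff (hδ : ∀ t σ, δS (f t) σ = (δT t σ).map f)
    (hfin : ∀ t, finS (f t) ↔ finT t) (hf : Function.Injective f) {j : ℕ} {tv : T × ℝ} :
    Prod.map f id tv ∈ accConfigs δS finS ρ j ↔ tv ∈ accConfigs δT finT ρ j :=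
  ⟨fun ⟨_, _, hF, h⟩ => ⟨_, _, hF.comap hδ hfin, h⟩,
    fun ⟨_, _, hF, h⟩ => ⟨_, _, hF.map hδ hfin hf, tv, h, rfl⟩⟩

theorem GSat_accConfigs_map (hδ : ∀ t σ, δS (f t) σ = (δT t σ).map f)
    (hfin : ∀ t, finS (f t) ↔ finT t) (hf : Function.Injective f) {j : ℕ} {v : ℝ}
    (γ : Gamma T) :
    GSat (accConfigs δS finS ρ j) v (γ.map f) ↔ GSat (accConfigs δT finT ρ j) v γ := by
  rw [GSat_map]
  exact iff_of_eq (congrArg (GSat · v γ) (Set.ext fun _ => mem_accConfigs_map_iff hδ hfin hf))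

end Embedding

theorem tm_sub_add_delay {ρ : TimedWord α} (i j : ℕ) :
    ρ.tm j - ρ.tm i + delay ρ (j + 1) = ρ.tm (j + 1) - ρ.tm i := by
  rw [delay, prevT]
  ring

section Words

theorem wordOf_self (a : ℕ → α) (j : ℕ) : wordOf a j j = [a j] := by
  simp [wordOf]

theorem wordOf_cons {a : ℕ → α} {i j : ℕ} (h : i ≤ j) :
    wordOf a i j = a i :: wordOf a (i + 1) j := by
  rw [wordOf, wordOf, show j + 1 - i = (j + 1 - (i + 1)) + 1 by omega, List.range_succ_eq_map]
  simp [Function.comp_def, Nat.add_right_comm, Nat.add_assoc]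

theorem wordOf_congr {a b : ℕ → α} {i j : ℕ} (h : ∀ k, i ≤ k → k ≤ j → a k = b k) :
    wordOf a i j = wordOf b i j :=
  List.map_congr_left fun k hk => h _ (Nat.le_add_right i k) (by simp at hk; omega)

theorem wordOf_ne_nil (a : ℕ → α) {i j : ℕ} (h : i ≤ j) : wordOf a i j ≠ [] := by
  simp [wordOf]
  omega

end Words

variable {n : ℕ}

inductive NFAL.Reaches (A : NFAL n) (H : ℕ → Fin n → Prop) (G : ℕ → Prop) : ℕ → ℕ → Prop
  | last {j q : ℕ} {a : Fin n} {q' : ℕ} :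
      q' ∈ A.trans q a → H j a → A.final q' = true → G j → A.Reaches H G j q
  | cons {j q : ℕ} {a : Fin n} {q' : ℕ} :
      q' ∈ A.trans q a → H j a → A.Reaches H G (j + 1) q' → A.Reaches H G j q

theorem NFAL.reaches_iff {A : NFAL n} {H : ℕ → Fin n → Prop} {G : ℕ → Prop} {j q : ℕ} :
    A.Reaches H G j q ↔ ∃ k, j ≤ k ∧ G k ∧ ∃ a : ℕ → Fin n,
      (∃ qf, A.final qf = true ∧ A.RunOn q (wordOf a j k) qf) ∧ ∀ ℓ, j ≤ ℓ → ℓ ≤ k → H ℓ (a ℓ) := by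
  constructor
  · intro h
    induction h with
    | @last j q a q' hq hH hf hG =>
      refine ⟨j, le_rfl, hG, fun _ => a, ⟨q', hf, ?_⟩, fun ℓ h₁ h₂ => ?_⟩
      · rw [wordOf_self]; exact ⟨q', hq, rfl⟩
      · rwa [le_antisymm h₂ h₁]
    | @cons j q a q' hq hH _ ih =>
      obtain ⟨k, hjk, hG, b, ⟨qf, hf, hrun⟩, hb⟩ := ih
      refine ⟨k, by omega, hG, Function.update b j a, ⟨qf, hf, ?_⟩, fun ℓ h₁ h₂ => ?_⟩
      · rw [wordOf_cons (by omega), Function.update_self,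
          wordOf_congr fun ℓ h _ => Function.update_of_ne (show ℓ ≠ j by omega) _ _]
        exact ⟨q', hq, hrun⟩
      · rcases eq_or_lt_of_le h₁ with rfl | h₁
        · rwa [Function.update_self]
        · rw [Function.update_of_ne (by omega)]; exact hb ℓ h₁ h₂
  · rintro ⟨k, hjk, hG, a, ⟨qf, hf, hrun⟩, ha⟩
    obtain ⟨d, rfl⟩ := Nat.exists_eq_add_of_le hjk
    induction d generalizing j q with
    | zero =>
      rw [Nat.add_zero, wordOf_self] at hrun
      obtain ⟨q', hq', rfl⟩ := hrun
      exact .last hq' (ha j le_rfl (by omega)) hf hG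
    | succ d ih =>
      rw [wordOf_cons (by omega)] at hrun
      obtain ⟨q', hq', hrun⟩ := hrun
      rw [show j + (d + 1) = j + 1 + d by omega] at hG ha hrun
      exact .cons hq' (ha j (by omega) (by omega))
        (ih (by omega) hG (fun ℓ h₁ h₂ => ha ℓ (by omega) h₂) hrun)

theorem autoWitL_iff_reaches {A : NFAL n} {tm : ℕ → ℝ} {H : ℕ → Fin n → Prop} {I : Ivl} {i : ℕ} :
    AutoWitL A tm H I i ↔ A.Reaches H (fun k => I.mem (tm k - tm i)) i A.init := by
  rw [NFAL.reaches_iff, AutoWitL]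
  refine exists_congr fun k => and_congr_right fun hik => and_congr_right fun _ =>
    exists_congr fun a => and_congr_left fun _ => ?_
  exact and_iff_right (wordOf_ne_nil a hik)

section Construction

variable {AP : Type}

def entryForm (φ : NNF AP) : (AP → Bool) → Gamma (locT φ) := (ocataDefs φ).1

def locForm (φ : NNF AP) : locT φ → (AP → Bool) → Gamma (locT φ) := (ocataDefs φ).2

abbrev NNF.accConfigs (φ : NNF AP) (ρ : TimedWord (AP → Bool)) : ℕ → Set (locT φ × ℝ) :=
  _root_.accConfigs (locForm φ) (finalP φ) ρ

variable (A : NFAL n) (I : Ivl) (args : Fin n → NNF AP)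

def autoStep (q : ℕ) (σ : AP → Bool) : Gamma (locT (.auto n A I args)) :=
  bigOr (List.ofFn fun a : Fin n =>
    .and ((entryForm (args a) σ).map fun m => Sum.inr ⟨a, m⟩)
         (bigOr ((A.trans q a).map fun q' =>
           if A.final q' then .or (.loc (Sum.inl q')) I.toGamma else .loc (Sum.inl q'))))

def dautoStep (q : ℕ) (σ : AP → Bool) : Gamma (locT (.dauto n A I args)) :=
  bigAnd (List.ofFn fun a : Fin n =>
    .or ((entryForm (args a) σ).map fun m => Sum.inr ⟨a, m⟩)
        (bigAnd ((A.trans q a).map fun q' =>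
          if A.final q' then .and (.loc (Sum.inl q')) I.toGamma.dual else .loc (Sum.inl q'))))

variable (σ : AP → Bool) (q : ℕ) (a : Fin n) (m : locT (args a))

theorem entryForm_auto : entryForm (.auto n A I args) σ = .reset (autoStep A I args A.init σ) := by
  rw [entryForm, ocataDefs]; rfl

theorem entryForm_dauto :
    entryForm (.dauto n A I args) σ = .reset (dautoStep A I args A.init σ) := by
  rw [entryForm, ocataDefs]; rfl

theorem locForm_auto_inl : locForm (.auto n A I args) (.inl q) σ = autoStep A I args q σ := by
  rw [locForm, ocataDefs]; rfl

theorem locForm_dauto_inl : locForm (.dauto n A I args) (.inl q) σ = dautoStep A I args q σ := by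
  rw [locForm, ocataDefs]; rfl

theorem locForm_auto_inr : locForm (.auto n A I args) (.inr ⟨a, m⟩) σ =
    (locForm (args a) m σ).map fun m' => Sum.inr ⟨a, m'⟩ := by
  rw [locForm, ocataDefs]; rfl

theorem locForm_dauto_inr : locForm (.dauto n A I args) (.inr ⟨a, m⟩) σ =
    (locForm (args a) m σ).map fun m' => Sum.inr ⟨a, m'⟩ := by
  rw [locForm, ocataDefs]; rfl

variable {A I args σ q}

theorem GSat_autoStep {M : Set (locT (.auto n A I args) × ℝ)} {v : ℝ} :
    GSat M v (autoStep A I args q σ) ↔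
      ∃ a, GSat M v ((entryForm (args a) σ).map fun m => Sum.inr ⟨a, m⟩) ∧
        ∃ q' ∈ A.trans q a, (Sum.inl q', v) ∈ M ∨ (A.final q' = true ∧ I.mem v) := by
  have hsucc : ∀ q', GSat M v (if A.final q' then .or (.loc (Sum.inl q')) I.toGamma
      else .loc (Sum.inl q')) ↔ (Sum.inl q', v) ∈ M ∨ (A.final q' = true ∧ I.mem v) := fun q' => by
    cases A.final q' <;> simp only [GSat, GSat_toGamma, Bool.false_eq_true, false_and, or_false,
      true_and, if_true, if_false] <;> exact Iff.rfl
  simp [autoStep, GSat_bigOr, GSat, hsucc]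

theorem GSat_dautoStep {M : Set (locT (.dauto n A I args) × ℝ)} {v : ℝ} :
    GSat M v (dautoStep A I args q σ) ↔
      ∀ a, GSat M v ((entryForm (args a) σ).map fun m => Sum.inr ⟨a, m⟩) ∨
        ∀ q' ∈ A.trans q a, (Sum.inl q', v) ∈ M ∧ (A.final q' = true → ¬ I.mem v) := by
  have hsucc : ∀ q', GSat M v (if A.final q' then .and (.loc (Sum.inl q')) I.toGamma.dual
      else .loc (Sum.inl q')) ↔ (Sum.inl q', v) ∈ M ∧ (A.final q' = true → ¬ I.mem v) :=
    fun q' => by cases A.final q' <;> simp only [GSat, GSat_dual_toGamma, Bool.false_eq_true,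
      false_imp_iff, and_true, true_imp_iff, if_true, if_false] <;> exact Iff.rfl
  simp [dautoStep, GSat_bigAnd, GSat, hsucc]

variable {a} {ρ : TimedWord (AP → Bool)}

theorem GSat_accConfigs_auto_inr {j : ℕ} {v : ℝ} (γ : Gamma (locT (args a))) :
    GSat ((NNF.auto n A I args).accConfigs ρ j) v (γ.map fun m => Sum.inr ⟨a, m⟩) ↔
      GSat ((args a).accConfigs ρ j) v γ :=
  GSat_accConfigs_map (finT := finalP (args a)) (fun m σ => locForm_auto_inr A I args σ a m)
    (fun _ => by rw [finalP])
    (Sum.inr_injective.comp sigma_mk_injective) γ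

theorem GSat_accConfigs_dauto_inr {j : ℕ} {v : ℝ} (γ : Gamma (locT (args a))) :
    GSat ((NNF.dauto n A I args).accConfigs ρ j) v (γ.map fun m => Sum.inr ⟨a, m⟩) ↔
      GSat ((args a).accConfigs ρ j) v γ :=
  GSat_accConfigs_map (finT := finalP (args a)) (fun m σ => locForm_dauto_inr A I args σ a m)
    (fun _ => by rw [finalP])
    (Sum.inr_injective.comp sigma_mk_injective) γ

theorem mem_accConfigs_auto_inl {i j : ℕ} :
    (Sum.inl q, ρ.tm j - ρ.tm i) ∈ (NNF.auto n A I args).accConfigs ρ (j + 1) ↔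
      GSat ((NNF.auto n A I args).accConfigs ρ (j + 1 + 1)) (ρ.tm (j + 1) - ρ.tm i)
        (autoStep A I args q (ρ.sym (j + 1))) := by
  refine mem_accConfigs_iff.trans ?_
  rw [← tm_sub_add_delay i j, ← locForm_auto_inl]

theorem mem_accConfigs_dauto_inl {i j : ℕ} :
    (Sum.inl q, ρ.tm j - ρ.tm i) ∈ (NNF.dauto n A I args).accConfigs ρ (j + 1) ↔
      GSat ((NNF.dauto n A I args).accConfigs ρ (j + 1 + 1)) (ρ.tm (j + 1) - ρ.tm i)
        (dautoStep A I args q (ρ.sym (j + 1))) := by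
  refine mem_accConfigs_iff.trans ?_
  rw [← tm_sub_add_delay i j, ← locForm_dauto_inl]

def EntryCorrect (φ : NNF AP) (ρ : TimedWord (AP → Bool)) : Prop :=
  ∀ i v, GSat (φ.accConfigs ρ (i + 1)) v (entryForm φ (ρ.sym i)) ↔ NNF.sat ρ i φ

theorem GSat_autoStep_of_reaches (ih : ∀ a, EntryCorrect (args a) ρ) {i j : ℕ}
    (h : A.Reaches (fun ℓ a => NNF.sat ρ ℓ (args a)) (fun k => I.mem (ρ.tm k - ρ.tm i)) j q) :
    GSat ((NNF.auto n A I args).accConfigs ρ (j + 1)) (ρ.tm j - ρ.tm i)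
      (autoStep A I args q (ρ.sym j)) := by
  induction h with
  | last hq hH hf hG =>
    exact GSat_autoStep.2
      ⟨_, (GSat_accConfigs_auto_inr _).2 ((ih _ _ _).2 hH), _, hq, .inr ⟨hf, hG⟩⟩
  | cons hq hH _ ihR =>
    exact GSat_autoStep.2
      ⟨_, (GSat_accConfigs_auto_inr _).2 ((ih _ _ _).2 hH), _, hq,
        .inl (mem_accConfigs_auto_inl.2 ihR)⟩

theorem reaches_of_GSat_autoStep (ih : ∀ a, EntryCorrect (args a) ρ) {i : ℕ}
    (h : GSat ((NNF.auto n A I args).accConfigs ρ (i + 1)) 0 (autoStep A I args A.init (ρ.sym i))) :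
    A.Reaches (fun ℓ a => NNF.sat ρ ℓ (args a)) (fun k => I.mem (ρ.tm k - ρ.tm i)) i A.init := by
  set W := (NNF.auto n A I args).accConfigs ρ
  set R := A.Reaches (fun ℓ a => NNF.sat ρ ℓ (args a)) (fun k => I.mem (ρ.tm k - ρ.tm i))
  by_contra hno
  have hstep : ∀ j q (M : Set (locT (.auto n A I args) × ℝ)), M ⊆ W (j + 1) → ¬ R j q →
      GSat M (ρ.tm j - ρ.tm i) (autoStep A I args q (ρ.sym j)) →
      ∃ q', (Sum.inl q', ρ.tm j - ρ.tm i) ∈ M ∧ ¬ R (j + 1) q' := by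
    intro j q M hM hq hg
    obtain ⟨a, hcomp, q', hq', hcase⟩ := GSat_autoStep.1 hg
    have hsat := (ih a j _).1 ((GSat_accConfigs_auto_inr _).1 (GSat_mono hM hcomp))
    rcases hcase with hmem | ⟨hf, hI⟩
    · exact ⟨q', hmem, fun hR => hq (.cons hq' hsat hR)⟩
    · exact absurd (.last hq' hsat hf hI) hq
  obtain ⟨EW, hW⟩ :=
    exists_isAccFragment_accConfigs (locForm (.auto n A I args)) (finalP _) ρ
  obtain ⟨q₀, hq₀, hR₀⟩ := hstep i A.init _ subset_rfl hno (by rwa [sub_self])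
  refine hW.false_of_invariant (P := fun j sv => ∃ k q, j = k + 1 ∧
    sv = (Sum.inl q, ρ.tm k - ρ.tm i) ∧ sv ∈ W j ∧ ¬ R j q) ?_ hq₀ ⟨i, q₀, rfl, rfl, hq₀, hR₀⟩
  rintro _ _ ⟨k, q, rfl, rfl, hmem, hR⟩
  obtain ⟨hg, hsucc⟩ := hW.consistent _ _ hmem
  obtain ⟨q', hE, hR'⟩ := hstep (k + 1) q _ (fun t ht => hsucc t ht) hR
    (by rw [← tm_sub_add_delay, ← locForm_auto_inl]; exact hg)
  exact ⟨by rw [finalP]; exact id, _, hE, k + 1, q', rfl, rfl, hsucc _ hE, hR'⟩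

theorem not_GSat_dautoStep_of_reaches (ih : ∀ a, EntryCorrect (args a) ρ) {i j : ℕ}
    (h : A.Reaches (fun ℓ a => ¬ NNF.sat ρ ℓ (args a)) (fun k => I.mem (ρ.tm k - ρ.tm i)) j q) :
    ¬ GSat ((NNF.dauto n A I args).accConfigs ρ (j + 1)) (ρ.tm j - ρ.tm i)
      (dautoStep A I args q (ρ.sym j)) := by
  induction h with
  | last hq hH hf hG =>
    intro hg
    obtain hcomp | hsucc := GSat_dautoStep.1 hg _
    · exact hH ((ih _ _ _).1 ((GSat_accConfigs_dauto_inr _).1 hcomp))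
    · exact (hsucc _ hq).2 hf hG
  | cons hq hH _ ihR =>
    intro hg
    obtain hcomp | hsucc := GSat_dautoStep.1 hg _
    · exact hH ((ih _ _ _).1 ((GSat_accConfigs_dauto_inr _).1 hcomp))
    · exact ihR (mem_accConfigs_dauto_inl.1 (hsucc _ hq).1)

theorem GSat_dautoStep_of_not_reaches (ih : ∀ a, EntryCorrect (args a) ρ) {i : ℕ}
    (hno : ¬ A.Reaches (fun ℓ a => ¬ NNF.sat ρ ℓ (args a)) (fun k => I.mem (ρ.tm k - ρ.tm i))
      i A.init) :
    GSat ((NNF.dauto n A I args).accConfigs ρ (i + 1)) 0 (dautoStep A I args A.init (ρ.sym i)) := by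
  set W := (NNF.dauto n A I args).accConfigs ρ
  set R := A.Reaches (fun ℓ a => ¬ NNF.sat ρ ℓ (args a)) (fun k => I.mem (ρ.tm k - ρ.tm i))
  have hstep : ∀ j q (M : Set (locT (.dauto n A I args) × ℝ)), W (j + 1) ⊆ M →
      (∀ q', ¬ R (j + 1) q' → (Sum.inl q', ρ.tm j - ρ.tm i) ∈ M) → ¬ R j q →
      GSat M (ρ.tm j - ρ.tm i) (dautoStep A I args q (ρ.sym j)) := by
    intro j q M hWM hM hq
    refine GSat_dautoStep.2 fun a => ?_
    by_cases hsat : NNF.sat ρ j (args a)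
    · exact .inl (GSat_mono hWM ((GSat_accConfigs_dauto_inr _).2 ((ih a j _).2 hsat)))
    · exact .inr fun q' hq' =>
        ⟨hM q' fun hR => hq (.cons hq' hsat hR), fun hf hI => hq (.last hq' hsat hf hI)⟩
  -- the non-reaching configurations have final locations, so every path through them accepts
  let C : ℕ → Set (locT (.dauto n A I args) × ℝ) := fun j =>
    {sv | ∃ k q, j = k + 1 ∧ i ≤ k ∧ sv = (Sum.inl q, ρ.tm k - ρ.tm i) ∧ ¬ R j q}
  have hC : ∀ j, C j ⊆ W j := by
    refine subset_accConfigs_of_step ?_ ?_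
    · rintro _ _ ⟨k, q, rfl, hik, rfl, hR⟩
      have h := hstep (k + 1) q (C (k + 1 + 1) ∪ W (k + 1 + 1)) Set.subset_union_right
        (fun q' hq' => .inl ⟨k + 1, q', rfl, by omega, rfl, hq'⟩) hR
      rwa [← tm_sub_add_delay, ← locForm_dauto_inl] at h
    · intro j p hp N
      obtain ⟨k, q, -, -, hq, -⟩ := hp N
      exact ⟨N, le_rfl, by rw [hq, finalP]; trivial⟩
  simpa only [sub_self] using
    hstep i A.init _ subset_rfl (fun q' hq' => hC _ ⟨i, q', rfl, le_rfl, rfl, hq'⟩) hno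

theorem entryCorrect (ρ : TimedWord (AP → Bool)) (φ : NNF AP) : EntryCorrect φ ρ := by
  induction φ with
  | top => exact fun _ _ => iff_of_true trivial trivial
  | bot => exact fun _ _ => iff_of_false id id
  | atom p => intro i v; cases h : ρ.sym i p <;> simp [entryForm, ocataDefs, GSat, NNF.sat, h]
  | natom p => intro i v; cases h : ρ.sym i p <;> simp [entryForm, ocataDefs, GSat, NNF.sat, h]
  | and φ ψ ihφ ihψ =>
    intro i v
    exact and_congr
      ((GSat_accConfigs_map (fun _ _ => rfl) (fun _ => Iff.rfl) Sum.inl_injective _).trans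
        (ihφ i v))
      ((GSat_accConfigs_map (fun _ _ => rfl) (fun _ => Iff.rfl) Sum.inr_injective _).trans
        (ihψ i v))
  | or φ ψ ihφ ihψ =>
    intro i v
    exact or_congr
      ((GSat_accConfigs_map (fun _ _ => rfl) (fun _ => Iff.rfl) Sum.inl_injective _).trans
        (ihφ i v))
      ((GSat_accConfigs_map (fun _ _ => rfl) (fun _ => Iff.rfl) Sum.inr_injective _).trans
        (ihψ i v))
  | auto n A I args ih =>
    intro i v
    rw [entryForm_auto, NNF.sat, autoWitL_iff_reaches]
    refine ⟨reaches_of_GSat_autoStep ih, fun h => ?_⟩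
    have hg := GSat_autoStep_of_reaches ih h
    rw [sub_self] at hg
    exact hg
  | dauto n A I args ih =>
    intro i v
    rw [entryForm_dauto, NNF.sat, autoWitL_iff_reaches]
    exact ⟨fun hg hR => not_GSat_dautoStep_of_reaches ih hR (by rwa [sub_self]),
      GSat_dautoStep_of_not_reaches ih⟩

end Construction

/-- The OCATA A_φ accepts exactly the timed language of φ: ⟦A_φ⟧ = ⟦φ⟧. -/
theorem Aphi_lang {AP : Type} (φ : NNF AP) :
    OCATALang (Aphi φ) = {ρ : TimedWord (AP → Bool) | NNF.sat ρ 0 φ} := by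
  ext ρ
  rw [Set.mem_ofPred_eq, mem_OCATALang_iff, mem_accConfigs_iff, ← entryCorrect ρ φ 0 0]
  exact GSat_accConfigs_map (f := some) (fun _ _ => rfl) (fun _ => Iff.rfl)
    (Option.some_injective _) _
end

section
/- For the two-position 'at-least-two-letters' automaton A¹ (initial s₀¹ with a ⊤ self-loop, transition to s₁¹, transition to final s₂¹ which has a ⊤ self-loop), and any NFA A, the product A² = A × A¹ satisfies: for every timed word ρ, position i, and interval I, (ρ,i) ⊨ A²_I(φ₁,…,φₙ) iff there exists j ≥ i + 2 with τⱼ − τᵢ ∈ I and an accepting run of A on a_i…a_j with (ρ,ℓ) ⊨ φ_{a_ℓ} for all i ≤ ℓ ≤ j; i.e., the product restricts A_I to witnesses of length at least 3 (at least two steps). -/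
/-- A non-deterministic finite automaton with locations `Q` over alphabet `α`. -/
structure NFA' (Q α : Type*) where
  init : Q
  trans : Q → α → Q → Prop
  final : Q → Prop

/-- `A.RunOn q w q'`: the NFA has a run on the finite word `w` from `q` to `q'`. -/
def NFA'.RunOn {Q α : Type*} (A : NFA' Q α) : Q → List α → Q → Prop
  | q, [], q' => q = q'
  | q, a :: w, q' => ∃ q'', A.trans q a q'' ∧ A.RunOn q'' w q'

/-- Acceptance of a (nonempty) finite word: some run from the initial location
ends in a final location. -/
def NFA'.Accepts {Q α : Type*} (A : NFA' Q α) (w : List α) : Prop :=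
  w ≠ [] ∧ ∃ qf, A.final qf ∧ A.RunOn A.init w qf

/-- EMITL formulae: φ := ⊤ | p | φ₁ ∧ φ₂ | ¬φ | A_I(φ₁,…,φₙ), where A is an NFA over
the n-ary alphabet and I ⊆ ℝ a constraining interval. -/
inductive EMITL (AP : Type) : Type 1 where
  | top : EMITL AP
  | atom (p : AP) : EMITL AP
  | and (φ ψ : EMITL AP) : EMITL AP
  | not (φ : EMITL AP) : EMITL AP
  | auto (n : ℕ) (Q : Type) (A : NFA' Q (Fin n)) (I : Set ℝ)
      (args : Fin n → EMITL AP) : EMITL AP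

/-- The (semantic) automaton-modality clause: there is j ≥ i with τⱼ − τᵢ ∈ I and an
accepting run of A on a word a_i…a_j such that the ℓ-th argument condition `H ℓ (a ℓ)`
holds for all i ≤ ℓ ≤ j. -/
def AutoWit {Q : Type*} {n : ℕ} (A : NFA' Q (Fin n)) (tm : ℕ → ℝ)
    (H : ℕ → Fin n → Prop) (I : Set ℝ) (i : ℕ) : Prop :=
  ∃ j, i ≤ j ∧ (tm j - tm i) ∈ I ∧
    ∃ a : ℕ → Fin n, A.Accepts (wordOf a i j) ∧ ∀ ℓ, i ≤ ℓ → ℓ ≤ j → H ℓ (a ℓ)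

/-- Pointwise semantics of EMITL over timed words. -/
def EMITL.sat {AP : Type} (ρ : TimedWord (Set AP)) : ℕ → EMITL AP → Prop
  | _, .top => True
  | i, .atom p => p ∈ ρ.sym i
  | i, .and φ ψ => EMITL.sat ρ i φ ∧ EMITL.sat ρ i ψ
  | i, .not φ => ¬ EMITL.sat ρ i φ
  | i, .auto n _ A I args =>
      AutoWit A ρ.tm (fun ℓ a => EMITL.sat ρ ℓ (args a)) I i


/-- Acceptance under the convention that a run on a word of length m+1 visits
m transitions (the first letter is read at the initial location). -/
def NFA'.AcceptsCtx {Q α : Type*} (A : NFA' Q α) (w : List α) : Prop :=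
  w ≠ [] ∧ ∃ qf, A.final qf ∧ A.RunOn A.init w.tail qf

/-- Product of two NFAs: locations are pairs, a pair is final iff both components are
final, transitions advance both components on the same letter. -/
def NFAProd {Q R α : Type*} (A : NFA' Q α) (B : NFA' R α) : NFA' (Q × R) α where
  init := (A.init, B.init)
  trans := fun s a s' => A.trans s.1 a s'.1 ∧ B.trans s.2 a s'.2
  final := fun s => A.final s.1 ∧ B.final s.2

/-- The 'at-least-two-steps' automaton A¹: initial location 0 with a ⊤ self-loop,
a transition 0 → 1, and a transition 1 → 2 to the final location 2, which has a ⊤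
self-loop; every letter is enabled on every transition. -/
def atLeastTwo (α : Type*) : NFA' (Fin 3) α where
  init := 0
  trans := fun q _ q' =>
    (q = 0 ∧ q' = 0) ∨ (q = 0 ∧ q' = 1) ∨ (q = 1 ∧ q' = 2) ∨ (q = 2 ∧ q' = 2)
  final := fun q => q = 2

lemma prod_run {Q R α : Type*} (A : NFA' Q α) (B : NFA' R α) :
    ∀ (w : List α) (q : Q) (r : R) (q' : Q) (r' : R),
    (NFAProd A B).RunOn (q, r) w (q', r') ↔ A.RunOn q w q' ∧ B.RunOn r w r' := by
  intro w
  induction w with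
  | nil => intro q r q' r'; simp [NFA'.RunOn, Prod.ext_iff]
  | cons a t ih =>
    intro q r q' r'
    constructor
    · rintro ⟨⟨q'', r''⟩, ⟨h1, h2⟩, hr⟩
      exact ⟨⟨q'', h1, ((ih _ _ _ _).1 hr).1⟩, ⟨r'', h2, ((ih _ _ _ _).1 hr).2⟩⟩
    · rintro ⟨⟨q'', h1, hr1⟩, ⟨r'', h2, hr2⟩⟩
      exact ⟨(q'', r''), ⟨h1, h2⟩, (ih _ _ _ _).2 ⟨hr1, hr2⟩⟩

lemma atl_bound {α : Type*} : ∀ (w : List α) (q q' : Fin 3),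
    (atLeastTwo α).RunOn q w q' → (q' : ℕ) ≤ (q : ℕ) + w.length := by
  intro w
  induction w with
  | nil => intro q q' h; cases h; simp
  | cons a t ih =>
    rintro q q' ⟨q'', ht, hr⟩
    have h2 := ih q'' q' hr
    rcases ht with ⟨h1, h3⟩ | ⟨h1, h3⟩ | ⟨h1, h3⟩ | ⟨h1, h3⟩ <;> subst h1 <;> subst h3 <;>
      simp_all <;> omega

lemma atl_run2 {α : Type*} : ∀ w : List α, (atLeastTwo α).RunOn 2 w 2 := by
  intro w
  induction w with
  | nil => rfl
  | cons a t ih => exact ⟨2, Or.inr (Or.inr (Or.inr ⟨rfl, rfl⟩)), ih⟩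

lemma atl_run0 {α : Type*} : ∀ w : List α, 2 ≤ w.length → (atLeastTwo α).RunOn 0 w 2 := by
  rintro (_ | ⟨a, _ | ⟨b, t⟩⟩) h
  · simp at h
  · simp at h
  · exact ⟨1, Or.inr (Or.inl ⟨rfl, rfl⟩),
      ⟨2, Or.inr (Or.inr (Or.inl ⟨rfl, rfl⟩)), atl_run2 t⟩⟩

lemma wordOf_length {α : Type*} (a : ℕ → α) (i j : ℕ) :
    (wordOf a i j).length = j + 1 - i := by simp [wordOf]

/-- With A² = A × A¹: (ρ,i) ⊨ A²_I(φ₁,…,φₙ) iff there exists j ≥ i + 2 with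
τⱼ − τᵢ ∈ I and an accepting run of A on a_i…a_j with (ρ,ℓ) ⊨ φ_{a_ℓ} for all
i ≤ ℓ ≤ j; i.e., the product restricts A_I to witnesses of length at least 3. -/
theorem prod_atLeastTwo_sem {n : ℕ} {Q : Type*} (A : NFA' Q (Fin n))
    (tm : ℕ → ℝ) (H : ℕ → Fin n → Prop) (I : Set ℝ) (i : ℕ) :
    (∃ j, i ≤ j ∧ (tm j - tm i) ∈ I ∧ ∃ a : ℕ → Fin n,
        (NFAProd A (atLeastTwo (Fin n))).AcceptsCtx (wordOf a i j) ∧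
        ∀ ℓ, i ≤ ℓ → ℓ ≤ j → H ℓ (a ℓ)) ↔
      (∃ j, i + 2 ≤ j ∧ (tm j - tm i) ∈ I ∧ ∃ a : ℕ → Fin n,
        A.AcceptsCtx (wordOf a i j) ∧ ∀ ℓ, i ≤ ℓ → ℓ ≤ j → H ℓ (a ℓ)) := by
  constructor
  · rintro ⟨j, hij, hI, a, ⟨hne, ⟨qf, q2⟩, ⟨hfA, hf2⟩, hrun⟩, hH⟩
    have hq2 : q2 = 2 := hf2
    subst hq2
    have hrun' : (NFAProd A (atLeastTwo (Fin n))).RunOn (A.init, (0 : Fin 3))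
        (wordOf a i j).tail (qf, 2) := hrun
    obtain ⟨hA, hB⟩ := (prod_run A (atLeastTwo (Fin n)) _ _ _ _ _).1 hrun'
    have hlen : (wordOf a i j).length = j + 1 - i := wordOf_length a i j
    have hnz : 0 < j + 1 - i := by
      by_contra h
      apply hne
      rw [← List.length_eq_zero_iff, hlen]; omega
    have hbd := atl_bound _ _ _ hB
    have htl : (wordOf a i j).tail.length = j + 1 - i - 1 := by
      rw [List.length_tail, hlen]
    refine ⟨j, by simp at hbd; omega, hI, a, ⟨hne, qf, hfA, hA⟩, hH⟩
  · rintro ⟨j, hij, hI, a, ⟨hne, qf, hfA, hA⟩, hH⟩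
    refine ⟨j, by omega, hI, a, ⟨hne, (qf, 2), ⟨hfA, rfl⟩, ?_⟩, hH⟩
    have htl : 2 ≤ (wordOf a i j).tail.length := by
      rw [List.length_tail, wordOf_length]; omega
    exact (prod_run A (atLeastTwo (Fin n)) _ _ _ _ _).2 ⟨hA, atl_run0 _ htl⟩
end
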